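/- arXiv:2002.01957 — 5 statements merged into one kernel-verified Lean document; each statement's English description precedes it below -/
import Mathlib

section
/- Let G and H be finite simple graphs with chromatic number χ(H) = ℓ, and let k be a positive integer. If the lexicographic product G[H] is k-indicated colorable, then G[K_ℓ] is k-indicated colorable, where K_ℓ is the complete graph on ℓ vertices. -/
open SimpleGraph
open scoped Classical

/-- The lexicographic product `G[H]`. -/
def lexProd {α β : Type*} (G : SimpleGraph α) (H : SimpleGraph β) :
    SimpleGraph (α × β) where
  Adj x y := G.Adj x.1 y.1 ∨ (x.1 = y.1 ∧ H.Adj x.2 y.2)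
  symm := ⟨by
    rintro x y (h | ⟨h1, h2⟩)
    · exact Or.inl h.symm
    · exact Or.inr ⟨h1.symm, h2.symm⟩⟩
  loopless := ⟨by
    rintro x (h | ⟨-, h2⟩)
    · exact G.loopless.irrefl _ h
    · exact H.loopless.irrefl _ h2⟩

/-- `AnnWins G k c`: starting from the partial proper coloring `c`, Ann (who presents
uncolored vertices one at a time) has a strategy so that Ben (who properly colors each
presented vertex with one of `k` colors) can always move, and the whole graph gets colored. -/
inductive AnnWins {V : Type*} (G : SimpleGraph V) (k : ℕ) :
    (V → Option (Fin k)) → Prop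
  | done (c : V → Option (Fin k)) (h : ∀ v, (c v).isSome) : AnnWins G k c
  | step (c : V → Option (Fin k)) (v : V) (hv : c v = none)
      (hex : ∃ col : Fin k, ∀ u, G.Adj u v → c u ≠ some col)
      (h : ∀ col : Fin k, (∀ u, G.Adj u v → c u ≠ some col) →
        AnnWins G k (Function.update c v (some col))) : AnnWins G k c

/-- A graph is `k`-indicated colorable if Ann wins the indicated coloring game
with `k` colors starting from the empty coloring. -/
def IndicatedColorable {V : Type*} (G : SimpleGraph V) (k : ℕ) : Prop :=
  AnnWins G k (fun _ => none)

/-- The indicated chromatic number `χᵢ(G)`. -/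
noncomputable def indicatedChromaticNumber {V : Type*} (G : SimpleGraph V) : ℕ :=
  sInf {k | IndicatedColorable G k}

/-- The coloring number `col(G)`: the least `d` such that every nonempty set `S` of
vertices contains a vertex with fewer than `d` neighbours in `S`. -/
noncomputable def coloringNumber {V : Type*} (G : SimpleGraph V) : ℕ :=
  sInf {d : ℕ | ∀ S : Set V, S.Nonempty → ∃ v ∈ S, {u ∈ S | G.Adj v u}.ncard < d}

/-- `F`-freeness: no induced subgraph of `G` is isomorphic to `F`. -/
def IsFreeOf {α β : Type*} (F : SimpleGraph α) (G : SimpleGraph β) : Prop :=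
  IsEmpty (F ↪g G)

/-- The complete expansion of `G`, replacing each vertex `v` by a clique on `m v` vertices. -/
def completeExpansion {V : Type*} (G : SimpleGraph V) (m : V → ℕ) :
    SimpleGraph (Σ v, Fin (m v)) where
  Adj x y := G.Adj x.1 y.1 ∨ (x.1 = y.1 ∧ x ≠ y)
  symm := ⟨by
    rintro x y (h | ⟨h1, h2⟩)
    · exact Or.inl h.symm
    · exact Or.inr ⟨h1.symm, h2.symm⟩⟩
  loopless := ⟨by
    rintro x (h | ⟨-, h2⟩)
    · exact G.loopless.irrefl _ h
    · exact h2 rfl⟩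

/-- The independent expansion of `G`, replacing each vertex `v` by an independent
set of `m v` vertices. -/
def independentExpansion {V : Type*} (G : SimpleGraph V) (m : V → ℕ) :
    SimpleGraph (Σ v, Fin (m v)) where
  Adj x y := G.Adj x.1 y.1
  symm := ⟨fun _ _ h => h.symm⟩
  loopless := ⟨fun _ h => G.loopless.irrefl _ h⟩

/-! Fix a proper coloring `f : H → Fin ℓ`; it is onto because `χ(H) = ℓ`, so `(x, b) ↦ (x, f b)`
is a surjective homomorphism `G[H] → G[K_ℓ]`. Ann plays on `G[K_ℓ]` by running her winning
strategy for `G[H]` through this map: when it presents `(x, b)`, she presents `(x, f b)` if that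
vertex is still uncolored, and otherwise pretends that Ben gave `(x, b)` the color of `(x, f b)`.
The real coloring stays the pushforward of the simulated one, and Ben is never stuck: the simulated
position is winning, so it extends to a proper `k`-coloring `g` of `G[H]`. The at least `ℓ` colors
that `g` uses on the fibre over `x` avoid the colors on the neighbouring fibres, so at most `k - ℓ`
colors reach `(x, j)` from those fibres and at most `ℓ - 1` from the rest of the clique over `x`. -/

open Finset Function

section PartialColorings

variable {V : Type*} {G : SimpleGraph V} {k : ℕ}

def IsAvailable (G : SimpleGraph V) (c : V → Option (Fin k)) (v : V) (col : Fin k) : Prop :=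
  ∀ u, G.Adj u v → c u ≠ some col

def IsProperPartial (G : SimpleGraph V) (c : V → Option (Fin k)) : Prop :=
  ∀ v t, c v = some t → IsAvailable G c v t

lemma isProperPartial_none : IsProperPartial G (fun _ => (none : Option (Fin k))) :=
  fun _ _ h => nomatch h

lemma IsProperPartial.update {c : V → Option (Fin k)} {v : V} {col : Fin k}
    (hc : IsProperPartial G c) (hcol : IsAvailable G c v col) :
    IsProperPartial G (update c v (some col)) := by
  intro w t hw u hadj hu
  rcases eq_or_ne w v with rfl | hwv
  · rw [update_self, Option.some_inj] at hw
    subst hw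
    rw [update_of_ne hadj.ne] at hu
    exact hcol u hadj hu
  · rw [update_of_ne hwv] at hw
    rcases eq_or_ne u v with rfl | huv
    · rw [update_self, Option.some_inj] at hu
      exact hcol w hadj.symm (hu ▸ hw)
    · exact hc w t hw u hadj (by rwa [update_of_ne huv] at hu)

lemma exists_isAvailable_of_card_lt {c : V → Option (Fin k)} {v : V}
    (h : #{t | ∃ u, G.Adj u v ∧ c u = some t} < k) : ∃ col, IsAvailable G c v col := by
  obtain ⟨col, -, hcol⟩ := exists_mem_notMem_of_card_lt_card (t := univ)
    (h.trans_eq (card_fin k).symm)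
  refine ⟨col, fun u hadj hu => hcol ?_⟩
  simpa using ⟨u, hadj, hu⟩

lemma card_filter_exists_mem_eq_some_le {ι γ : Type*} [Fintype γ] (φ : ι → Option γ)
    (s : Finset ι) [DecidablePred fun t => ∃ i ∈ s, φ i = some t] :
    #{t | ∃ i ∈ s, φ i = some t} ≤ #s := by
  rw [← card_map Embedding.some]
  refine (card_le_card (t := s.image φ) ?_).trans card_image_le
  simp only [subset_iff, mem_map, mem_filter_univ, mem_image, Embedding.some_apply]
  rintro _ ⟨t, ⟨i, hi, hφ⟩, rfl⟩
  exact ⟨i, hi, hφ⟩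

theorem AnnWins.exists_coloring_extending {c : V → Option (Fin k)} (hc : AnnWins G k c)
    (hp : IsProperPartial G c) : ∃ g : G.Coloring (Fin k), ∀ v t, c v = some t → g v = t := by
  induction hc with
  | done c hall =>
    refine ⟨Coloring.mk (fun v => (c v).get (hall v)) fun {u w} hadj heq => ?_,
      fun v t hv => Option.get_of_eq_some _ hv⟩
    exact hp w _ (Option.some_get _).symm u hadj (by rw [← heq, Option.some_get])
  | step c v hv hex _ ih =>
    obtain ⟨col, hcol⟩ := hex
    obtain ⟨g, hg⟩ := ih col hcol (hp.update hcol)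
    refine ⟨g, fun w t hw => hg w t ?_⟩
    rwa [update_of_ne (by rintro rfl; simp_all)]

end PartialColorings

section Pushforward

variable {V W : Type*} {G₁ : SimpleGraph V} {G₂ : SimpleGraph W} {k : ℕ}
  {π : V → W} {c : V → Option (Fin k)} {c' : W → Option (Fin k)}

def IsPushforward (π : V → W) (c : V → Option (Fin k)) (c' : W → Option (Fin k)) : Prop :=
  ∀ w t, c' w = some t ↔ ∃ v, π v = w ∧ c v = some t

lemma isPushforward_none :
    IsPushforward π (fun _ => (none : Option (Fin k))) (fun _ => none) := by
  simp [IsPushforward]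

namespace IsPushforward

lemma isAvailable {φ : G₁ →g G₂} (hs : IsPushforward φ c c') {v : V} {t : Fin k}
    (ht : IsAvailable G₂ c' (φ v) t) : IsAvailable G₁ c v t :=
  fun u hadj hu => ht (φ u) (φ.map_adj hadj) ((hs _ t).mpr ⟨u, rfl, hu⟩)

lemma isProperPartial {φ : G₁ →g G₂} (hs : IsPushforward φ c c')
    (hc' : IsProperPartial G₂ c') : IsProperPartial G₁ c :=
  fun v t hv => hs.isAvailable (hc' (φ v) t ((hs _ t).mpr ⟨v, rfl, hv⟩))

lemma forall_isSome (hs : IsPushforward π c c') (hπ : Surjective π)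
    (hc : ∀ v, (c v).isSome) (w : W) : (c' w).isSome := by
  obtain ⟨v, rfl⟩ := hπ w
  obtain ⟨t, ht⟩ := Option.isSome_iff_exists.mp (hc v)
  simp [(hs _ t).mpr ⟨v, rfl, ht⟩]

lemma exists_eq_of_extends (hs : IsPushforward π c c') {g : V → Fin k}
    (hg : ∀ v t, c v = some t → g v = t) {w : W} {t : Fin k} (ht : c' w = some t) :
    ∃ v, π v = w ∧ g v = t :=
  ((hs w t).mp ht).imp fun v hv => ⟨hv.1, hg v t hv.2⟩

lemma update (hs : IsPushforward π c c') {v : V} {t : Fin k} (hv : c v = none)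
    (hv' : ∀ s, c' (π v) = some s → s = t) :
    IsPushforward π (update c v (some t)) (update c' (π v) (some t)) := by
  intro w s
  rcases eq_or_ne w (π v) with rfl | hw
  · rw [update_self, Option.some_inj]
    constructor
    · rintro rfl
      exact ⟨v, rfl, update_self ..⟩
    · rintro ⟨u, hu, hus⟩
      rcases eq_or_ne u v with rfl | huv
      · rwa [update_self, Option.some_inj] at hus
      · rw [update_of_ne huv] at hus
        exact (hv' s ((hs _ s).mpr ⟨u, hu, hus⟩)).symm
  · rw [update_of_ne hw, hs]
    refine exists_congr fun u => and_congr_right fun hu => ?_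
    rw [update_of_ne (by rintro rfl; exact hw hu.symm)]

end IsPushforward

theorem AnnWins.of_isPushforward (φ : G₁ →g G₂) (hφ : Surjective φ)
    (hfree : ∀ (g : G₁.Coloring (Fin k)) (c' : W → Option (Fin k)),
      (∀ w t, c' w = some t → ∃ v, φ v = w ∧ g v = t) → ∀ w, ∃ col, IsAvailable G₂ c' w col)
    (hc : AnnWins G₁ k c) (hc' : IsProperPartial G₂ c') (hs : IsPushforward φ c c') :
    AnnWins G₂ k c' := by
  induction hc generalizing c' with
  | done c hall => exact .done c' (hs.forall_isSome hφ hall)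
  | step c v hv hex hwin ih =>
    obtain ⟨g, hg⟩ := (AnnWins.step c v hv hex hwin).exists_coloring_extending
      (hs.isProperPartial hc')
    cases hv' : c' (φ v) with
    | none =>
      refine .step c' (φ v) hv' (hfree g c' (fun _ _ => hs.exists_eq_of_extends hg) (φ v))
        fun col hcol =>
          ih col (hs.isAvailable hcol) (hc'.update hcol) (hs.update hv (by simp [hv']))
    | some t =>
      have hs' := hs.update hv (t := t) (by simp [hv'])
      rw [(update_eq_self_iff (f := c')).mpr hv'.symm] at hs'
      exact ih t (hs.isAvailable (hc' _ _ hv')) hc' hs'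

end Pushforward

section LexProd

variable {α β γ : Type*} (G : SimpleGraph α) {H : SimpleGraph β}

def lexProdMap {β' : Type*} {H' : SimpleGraph β'} (f : H →g H') :
    lexProd G H →g lexProd G H' where
  toFun p := (p.1, f p.2)
  map_rel' := by
    rintro _ _ (h | ⟨h, h'⟩)
    exacts [Or.inl h, Or.inr ⟨h, f.map_adj h'⟩]

lemma lexProdMap_surjective {β' : Type*} {H' : SimpleGraph β'} {f : H →g H'}
    (hf : Surjective f) : Surjective (lexProdMap G f) := by
  rintro ⟨x, b'⟩
  obtain ⟨b, rfl⟩ := hf b'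
  exact ⟨(x, b), rfl⟩

def lexProdFiber (x : α) : H →g lexProd G H where
  toFun b := (x, b)
  map_rel' h := Or.inr ⟨rfl, h⟩

lemma SimpleGraph.Coloring.chromaticNumber_le_card_range [Fintype γ] (C : H.Coloring γ) :
    H.chromaticNumber ≤ #{t | ∃ b, C b = t} := by
  let C' : H.Coloring {t // t ∈ ({t | ∃ b, C b = t} : Finset γ)} :=
    Coloring.mk (fun b => ⟨C b, by simp⟩) fun h heq => C.valid h (congrArg Subtype.val heq)
  have := C'.colorable.chromaticNumber_le
  rwa [Fintype.card_coe] at this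

lemma card_colors_of_adj_fibers_add_le [Fintype γ] {ℓ : ℕ} (hℓ : ℓ ≤ H.chromaticNumber)
    (g : (lexProd G H).Coloring γ) (x : α) :
    #{t | ∃ v : α × β, G.Adj v.1 x ∧ g v = t} + ℓ ≤ Fintype.card γ := by
  have hfiber : ℓ ≤ #{t | ∃ b, g (x, b) = t} := by
    exact_mod_cast hℓ.trans
      (Coloring.chromaticNumber_le_card_range (g.comp (lexProdFiber G x)))
  have hdisj : Disjoint ({t | ∃ v : α × β, G.Adj v.1 x ∧ g v = t} : Finset γ)
      ({t | ∃ b, g (x, b) = t} : Finset γ) := by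
    simp only [Finset.disjoint_left, mem_filter_univ]
    rintro _ ⟨v, hv, rfl⟩ ⟨b, hb⟩
    exact g.valid (Or.inl hv) hb.symm
  calc _ ≤ _ := Nat.add_le_add_left hfiber _
    _ = #(_ ∪ _) := (card_union_of_disjoint hdisj).symm
    _ ≤ _ := card_le_univ _

lemma lexProd_top_exists_isAvailable {k ℓ : ℕ} (hℓ : ℓ ≤ H.chromaticNumber)
    (g : (lexProd G H).Coloring (Fin k)) {c : α × Fin ℓ → Option (Fin k)}
    (hc : ∀ p t, c p = some t → ∃ b, g (p.1, b) = t) (p : α × Fin ℓ) :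
    ∃ col, IsAvailable (lexProd G ⊤) c p col := by
  obtain ⟨x, j⟩ := p
  refine exists_isAvailable_of_card_lt ?_
  have hsub : ({t | ∃ u, (lexProd G ⊤).Adj u (x, j) ∧ c u = some t} : Finset (Fin k)) ⊆
      ({t | ∃ i ∈ univ.erase j, c (x, i) = some t} : Finset (Fin k)) ∪
        ({t | ∃ v : α × β, G.Adj v.1 x ∧ g v = t} : Finset (Fin k)) := by
    simp only [subset_iff, mem_union, mem_filter_univ]
    rintro t ⟨⟨y, i⟩, hadj | ⟨rfl, hij⟩, hu⟩
    · obtain ⟨b, rfl⟩ := hc _ t hu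
      exact Or.inr ⟨(y, b), hadj, rfl⟩
    · exact Or.inl ⟨i, mem_erase.mpr ⟨hij, mem_univ i⟩, hu⟩
  have hA : #({t | ∃ i ∈ univ.erase j, c (x, i) = some t} : Finset (Fin k)) ≤ ℓ - 1 :=
    (card_filter_exists_mem_eq_some_le _ _).trans_eq (by simp)
  have hD := card_colors_of_adj_fibers_add_le G hℓ g x
  rw [Fintype.card_fin] at hD
  have := j.pos
  calc _ ≤ _ := card_le_card hsub
    _ ≤ _ := card_union_le _ _
    _ < k := by omega

end LexProd

theorem lexProd_complete_indicatedColorable_of_lexProd_indicatedColorable_general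
    {α β : Type*} (G : SimpleGraph α) (H : SimpleGraph β)
    (ℓ : ℕ) (hℓ : H.chromaticNumber = ℓ) (k : ℕ)
    (h : IndicatedColorable (lexProd G H) k) :
    IndicatedColorable (lexProd G (⊤ : SimpleGraph (Fin ℓ))) k := by
  obtain ⟨f⟩ := chromaticNumber_le_iff_colorable.mp hℓ.le
  have hf : Surjective f := le_chromaticNumber_iff_forall_surjective.mp hℓ.ge f
  refine h.of_isPushforward (lexProdMap G f) (lexProdMap_surjective G hf) (fun g c hc => ?_)
    isProperPartial_none isPushforward_none
  refine lexProd_top_exists_isAvailable G hℓ.ge g fun p t hp => ?_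
  obtain ⟨v, rfl, rfl⟩ := hc p t hp
  exact ⟨v.2, rfl⟩

/-- If `χ(H) = ℓ` and `G[H]` is `k`-indicated colorable, then `G[K_ℓ]` is
`k`-indicated colorable. -/
theorem lexProd_complete_indicatedColorable_of_lexProd_indicatedColorable
    {α β : Type*} [Fintype α] [Fintype β] (G : SimpleGraph α) (H : SimpleGraph β)
    (ℓ : ℕ) (hℓ : H.chromaticNumber = ℓ) (k : ℕ) (hk : 0 < k)
    (h : IndicatedColorable (lexProd G H) k) :
    IndicatedColorable (lexProd G (⊤ : SimpleGraph (Fin ℓ))) k :=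
  lexProd_complete_indicatedColorable_of_lexProd_indicatedColorable_general G H ℓ hℓ k h
end

section
/- Let G and H be finite simple graphs, let G′ be a nonempty induced subgraph of G with minimum degree δ(G′) = col(G) − 1, and let H′ be a nonempty induced subgraph of H with minimum degree δ(H′) = col(H) − 1. Then col(G[H]) ≥ col(G)·|V(H′)| − |V(H′)| + col(H); consequently col(G[H]) − col(G)·col(H) ≥ (col(G) − 1)·(|V(H′)| − 1 − δ(H′)). -/
open SimpleGraph
open scoped Classical

/-!
In `G[H]`, the neighbours of `(a, b)` inside `s × t` are `(N(a) ∩ s) × t` together with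
`{a} × (N(b) ∩ t)`, so every vertex of `s × t` has at least `δ(G[s])·|t| + δ(H[t])` neighbours
in `s × t`. Hence `col(G[H]) ≥ δ(G[s])·|t| + δ(H[t]) + 1`, which is the first bound once
`δ(G[s]) = col(G) - 1` and `δ(H[t]) = col(H) - 1`; the second is a rearrangement of the first.
-/

open Finset

lemma le_coloringNumber_of_forall_le_card_filter {V : Type*} [Fintype V] (G : SimpleGraph V)
    {S : Finset V} (hS : S.Nonempty) {k : ℕ} (h : ∀ v ∈ S, k ≤ #(S.filter (G.Adj v))) :
    k + 1 ≤ coloringNumber G := by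
  refine le_csInf ⟨Nat.card V + 1, fun T _ => ?_⟩ fun d hd => ?_
  · obtain ⟨v, hv⟩ := ‹T.Nonempty›
    exact ⟨v, hv, Nat.lt_succ_of_le (Set.ncard_le_card _)⟩
  · obtain ⟨v, hv, hlt⟩ := hd S (by exact_mod_cast hS)
    rw [show {u ∈ (S : Set V) | G.Adj v u} = ↑(S.filter (G.Adj v)) by ext; simp,
      Set.ncard_coe_finset] at hlt
    exact h v hv |>.trans_lt hlt

lemma minDegree_induce_le_card_filter_adj {V : Type*} [Fintype V] (G : SimpleGraph V)
    {s : Finset V} {a : V} (ha : a ∈ s) :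
    (G.induce (s : Set V)).minDegree ≤ #(s.filter (G.Adj a)) := by
  have : Nonempty (s : Set V) := ⟨⟨a, ha⟩⟩
  refine ((G.induce (s : Set V)).minDegree_le_degree ⟨a, ha⟩).trans ?_
  refine card_le_card_of_injOn Subtype.val (fun x hx => ?_) Subtype.val_injective.injOn
  rw [mem_coe, mem_neighborFinset] at hx
  exact mem_filter.2 ⟨x.2, hx⟩

section lexProd

variable {α β : Type*} (G : SimpleGraph α) (H : SimpleGraph β)

@[simp]
lemma lexProd_adj {x y : α × β} :
    (lexProd G H).Adj x y ↔ G.Adj x.1 y.1 ∨ (x.1 = y.1 ∧ H.Adj x.2 y.2) :=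
  Iff.rfl

lemma filter_lexProd_adj_product {s : Finset α} (t : Finset β) {a : α} (ha : a ∈ s) (b : β) :
    (s ×ˢ t).filter ((lexProd G H).Adj (a, b)) =
      (s.filter (G.Adj a)) ×ˢ t ∪ {a} ×ˢ t.filter (H.Adj b) := by
  ext ⟨x, y⟩
  simp only [lexProd_adj, mem_filter, mem_product, mem_union, mem_singleton]
  constructor
  · rintro ⟨⟨hx, hy⟩, hadj | ⟨rfl, hadj⟩⟩
    exacts [Or.inl ⟨⟨hx, hadj⟩, hy⟩, Or.inr ⟨rfl, hy, hadj⟩]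
  · rintro (⟨⟨hx, hadj⟩, hy⟩ | ⟨rfl, hy, hadj⟩)
    exacts [⟨⟨hx, hy⟩, Or.inl hadj⟩, ⟨⟨ha, hy⟩, Or.inr ⟨rfl, hadj⟩⟩]

lemma card_filter_lexProd_adj_product {s : Finset α} (t : Finset β) {a : α} (ha : a ∈ s)
    (b : β) :
    #((s ×ˢ t).filter ((lexProd G H).Adj (a, b))) =
      #(s.filter (G.Adj a)) * #t + #(t.filter (H.Adj b)) := by
  have hdisj : Disjoint ((s.filter (G.Adj a)) ×ˢ t) ({a} ×ˢ t.filter (H.Adj b)) :=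
    disjoint_product.2 <| Or.inl <| disjoint_singleton_right.2 fun h =>
      G.loopless.irrefl a (mem_filter.1 h).2
  rw [filter_lexProd_adj_product G H t ha b, card_union_of_disjoint hdisj, card_product,
    card_product, card_singleton, one_mul]

lemma minDegree_induce_mul_card_add_minDegree_induce_add_one_le_coloringNumber_lexProd
    [Fintype α] [Fintype β] {s : Finset α} (hs : s.Nonempty) {t : Finset β} (ht : t.Nonempty) :
    (G.induce (s : Set α)).minDegree * #t + (H.induce (t : Set β)).minDegree + 1
      ≤ coloringNumber (lexProd G H) := by
  refine le_coloringNumber_of_forall_le_card_filter _ (hs.product ht) fun ⟨a, b⟩ hab => ?_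
  obtain ⟨ha, hb⟩ := mem_product.1 hab
  rw [card_filter_lexProd_adj_product G H t ha b]
  gcongr
  exacts [minDegree_induce_le_card_filter_adj G ha, minDegree_induce_le_card_filter_adj H hb]

end lexProd

/-- If `G′ = G[s]` is a nonempty induced subgraph of `G` with `δ(G′) = col(G) - 1` and
`H′ = H[t]` is a nonempty induced subgraph of `H` with `δ(H′) = col(H) - 1`, then
`col(G[H]) ≥ col(G)·|V(H′)| - |V(H′)| + col(H)`, and consequently
`col(G[H]) - col(G)·col(H) ≥ (col(G) - 1)·(|V(H′)| - 1 - δ(H′))`. -/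
theorem coloringNumber_lexProd_lower_bound {α β : Type*} [Fintype α] [Fintype β]
    (G : SimpleGraph α) (H : SimpleGraph β)
    (s : Finset α) (hs : s.Nonempty) (t : Finset β) (ht : t.Nonempty)
    (hG : (G.induce (s : Set α)).minDegree + 1 = coloringNumber G)
    (hH : (H.induce (t : Set β)).minDegree + 1 = coloringNumber H) :
    (coloringNumber G : ℤ) * t.card - t.card + coloringNumber H
        ≤ (coloringNumber (lexProd G H) : ℤ) ∧
    ((coloringNumber G : ℤ) - 1) *
        ((t.card : ℤ) - 1 - (H.induce (t : Set β)).minDegree)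
      ≤ (coloringNumber (lexProd G H) : ℤ) - coloringNumber G * coloringNumber H := by
  have key : ((G.induce (s : Set α)).minDegree * #t + (H.induce (t : Set β)).minDegree + 1 : ℤ)
      ≤ coloringNumber (lexProd G H) := by
    exact_mod_cast minDegree_induce_mul_card_add_minDegree_induce_add_one_le_coloringNumber_lexProd
      G H hs ht
  rw [← hG, ← hH]
  push_cast
  constructor <;> linear_combination key
end

section
/- Let t ≥ 4 and let G be a finite simple graph with no induced subgraph isomorphic to the complement P̄_t of the path on t vertices. Then every complete expansion 𝕂[G] of G (with arbitrary positive clique sizes m_v) has no induced subgraph isomorphic to P̄_t. -/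
/-!
Two vertices in the same clique of `𝕂[G]` are adjacent true twins. `P̄_t` has no adjacent true
twins when `t ≥ 4`, so an induced copy of it in `𝕂[G]` meets each clique at most once, and
projecting each vertex to its clique gives an induced copy in `G`.
-/

open SimpleGraph
open scoped Classical

/-- No two adjacent vertices of `F` are true twins, i.e. have the same closed neighbourhood. -/
def TrueTwinFree {α : Type*} (F : SimpleGraph α) : Prop :=
  ∀ ⦃x y⦄, F.Adj x y → ∃ z, z ≠ x ∧ z ≠ y ∧ ¬(F.Adj z x ↔ F.Adj z y)

theorem trueTwinFree_compl_pathGraph {t : ℕ} (ht : t ≠ 3) : TrueTwinFree (pathGraph t)ᶜ := by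
  intro x y hxy
  wlog hlt : x < y generalizing x y
  · obtain ⟨z, hzy, hzx, hz⟩ := this hxy.symm (lt_of_le_of_ne (not_lt.mp hlt) hxy.ne.symm)
    exact ⟨z, hzx, hzy, fun h => hz h.symm⟩
  simp only [compl_adj, pathGraph_adj, ne_eq, Fin.ext_iff, Fin.lt_def] at hxy hlt
  -- in `P_t`, `x - 1` is a neighbour of `x` but not of `y`; if `x = 0`, so is `1` (`3` if `y = 2`)
  refine ⟨⟨if 0 < x.val then x - 1 else if y.val = 2 then 3 else 1, by split_ifs <;> omega⟩,
    ?_, ?_, ?_⟩ <;>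
  simp only [compl_adj, pathGraph_adj, ne_eq, Fin.ext_iff] <;> split_ifs <;> omega

section completeExpansion

variable {V : Type*} {G : SimpleGraph V} {m : V → ℕ}

@[simp]
theorem completeExpansion_adj {x y : Σ v, Fin (m v)} :
    (completeExpansion G m).Adj x y ↔ G.Adj x.1 y.1 ∨ (x.1 = y.1 ∧ x ≠ y) :=
  Iff.rfl

theorem completeExpansion_adj_iff_of_fst_eq {x y z : Σ v, Fin (m v)} (hxy : x.1 = y.1)
    (hzx : z ≠ x) (hzy : z ≠ y) :
    (completeExpansion G m).Adj z x ↔ (completeExpansion G m).Adj z y := by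
  simp only [completeExpansion_adj, hxy, ne_eq, hzx, hzy, not_false_eq_true, and_true]

theorem fst_comp_injective_of_trueTwinFree {α : Type*} {F : SimpleGraph α} (hF : TrueTwinFree F)
    (f : F ↪g completeExpansion G m) : Function.Injective (Sigma.fst ∘ f) := by
  intro a b hab
  by_contra hne
  have hadj : F.Adj a b := f.map_adj_iff.mp <| completeExpansion_adj.mpr <|
    Or.inr ⟨hab, f.injective.ne hne⟩
  obtain ⟨z, hza, hzb, hz⟩ := hF hadj
  exact hz <| by
    rw [← f.map_adj_iff, ← f.map_adj_iff]
    exact completeExpansion_adj_iff_of_fst_eq hab (f.injective.ne hza) (f.injective.ne hzb)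

theorem IsFreeOf.completeExpansion {α : Type*} {F : SimpleGraph α} (hF : TrueTwinFree F)
    (hG : IsFreeOf F G) (m : V → ℕ) : IsFreeOf F (completeExpansion G m) := by
  refine ⟨fun f => ?_⟩
  have hfst := fst_comp_injective_of_trueTwinFree hF f
  refine hG.false ⟨⟨Sigma.fst ∘ f, hfst⟩, fun {a b} => ?_⟩
  rw [← f.map_adj_iff, completeExpansion_adj]
  exact (or_iff_left fun ⟨h, hne⟩ => hne (congrArg f (hfst h))).symm

end completeExpansion

theorem completeExpansion_complPathFree_general {V : Type*} (t : ℕ) (ht : 4 ≤ t)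
    (G : SimpleGraph V) (hG : IsFreeOf (pathGraph t)ᶜ G)
    (m : V → ℕ) :
    IsFreeOf (pathGraph t)ᶜ (completeExpansion G m) :=
  hG.completeExpansion (trueTwinFree_compl_pathGraph (by omega)) m

/-- If `t ≥ 4` and `G` is `P̄_t`-free, then every complete expansion of `G` is `P̄_t`-free. -/
theorem completeExpansion_complPathFree {V : Type*} [Fintype V] (t : ℕ) (ht : 4 ≤ t)
    (G : SimpleGraph V) (hG : IsFreeOf (pathGraph t)ᶜ G)
    (m : V → ℕ) (hm : ∀ v, 0 < m v) :
    IsFreeOf (pathGraph t)ᶜ (completeExpansion G m) :=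
  completeExpansion_complPathFree_general t ht G hG m
end

section
/- Let G be a finite complete multipartite graph. Then every complete expansion 𝕂[G] of G (with arbitrary positive clique sizes m_v) is k-indicated colorable for every integer k ≥ χ(𝕂[G]). -/
open SimpleGraph
open scoped Classical

/-!
In every part of the complete multipartite graph pick a vertex `w` with `m w` maximal. The
cliques of these representatives together form a clique of `𝕂[G]`, so they have at most
`χ(𝕂[G]) ≤ k` vertices, and Ann presents them first: each then sees fewer than `k` colored
vertices. Afterwards a vertex `(v, i)` may be presented in any order: every neighbour outside
the clique of `v` is adjacent to the whole (colored) clique of the representative `w` of the part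
of `v`, hence avoids its `m w` distinct colors, while the clique of `v` carries at most
`m v - 1 < m w` colors besides; so one of the colors on the clique of `w` is free.
-/

open Finset Function

section IndicatedGame

variable {W : Type*} {H : SimpleGraph W} {k : ℕ}

def IsPartialColoring (H : SimpleGraph W) (c : W → Option (Fin k)) : Prop :=
  ∀ ⦃x y a⦄, H.Adj x y → c x = some a → c y ≠ some a

lemma IsPartialColoring.update {c : W → Option (Fin k)} (hc : IsPartialColoring H c)
    {v : W} {a : Fin k} (ha : ∀ u, H.Adj u v → c u ≠ some a) :
    IsPartialColoring H (update c v (some a)) := by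
  intro x y b hxy hx hy
  rcases eq_or_ne x v with rfl | hxv
  · rw [update_self, Option.some_inj] at hx
    subst hx
    rw [update_of_ne hxy.ne'] at hy
    exact ha y hxy.symm hy
  · rw [update_of_ne hxv] at hx
    rcases eq_or_ne y v with rfl | hyv
    · rw [update_self, Option.some_inj] at hy
      subst hy
      exact ha x hxy hx
    · rw [update_of_ne hyv] at hy
      exact hc hxy hx hy

lemma annWins_of_invariant [Fintype W] (P : (W → Option (Fin k)) → Prop)
    (hstep : ∀ c, P c → (∃ v, c v = none) → ∃ v, c v = none ∧
      (∃ a, ∀ u, H.Adj u v → c u ≠ some a) ∧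
      ∀ a, (∀ u, H.Adj u v → c u ≠ some a) → P (update c v (some a)))
    (c : W → Option (Fin k)) (hc : P c) : AnnWins H k c := by
  induction hn : #{v | c v = none} using Nat.strong_induction_on generalizing c with
  | _ n ih =>
  by_cases hdone : ∀ v, (c v).isSome
  · exact .done c hdone
  obtain ⟨v, hv, hfree, hP⟩ := hstep c hc (by simpa using hdone)
  refine .step c v hv hfree fun a ha => ih _ ?_ _ (hP a ha) rfl
  rw [← hn]
  refine card_lt_card ⟨fun x hx => ?_, fun hsub => ?_⟩
  · rcases eq_or_ne x v with rfl | hxv <;> simp_all [update_apply]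
  · simpa using hsub (mem_filter.2 ⟨mem_univ v, hv⟩)

lemma exists_unused_color {c : W → Option (Fin k)} (T : Finset W)
    (hT : ∀ u, c u ≠ none → u ∈ T) (hTk : #T < k) : ∃ a, ∀ u, c u ≠ some a := by
  classical
  have hcard : #(T.image c) < #(univ.map Embedding.some : Finset (Option (Fin k))) := by
    simpa using card_image_le.trans_lt hTk
  obtain ⟨_, ha, hnot⟩ := exists_mem_notMem_of_card_lt_card hcard
  obtain ⟨a, -, rfl⟩ := mem_map.1 ha
  exact ⟨a, fun u hu => hnot (mem_image.2 ⟨u, hT u (by simp [hu]), hu⟩)⟩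

lemma IsPartialColoring.exists_free_color {c : W → Option (Fin k)}
    (hc : IsPartialColoring H c) {K S : Finset W} (hK : H.IsClique (K : Set W))
    (hKc : ∀ y ∈ K, c y ≠ none) (hSK : #S < #K) {x : W}
    (hx : ∀ u, H.Adj u x → u ∉ S → ∀ y ∈ K, H.Adj u y) :
    ∃ a, ∀ u, H.Adj u x → c u ≠ some a := by
  classical
  have hinj : Set.InjOn c K := by
    intro y hy y' hy' he
    by_contra hne
    obtain ⟨a, ha⟩ := Option.ne_none_iff_exists'.1 (hKc y hy)
    exact hc (hK hy hy' hne) ha (he ▸ ha)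
  have hcard : #(S.image c) < #(K.image c) := by
    rw [card_image_of_injOn hinj]; exact card_image_le.trans_lt hSK
  obtain ⟨_, hK', hS'⟩ := exists_mem_notMem_of_card_lt_card hcard
  obtain ⟨y, hy, rfl⟩ := mem_image.1 hK'
  obtain ⟨a, ha⟩ := Option.ne_none_iff_exists'.1 (hKc y hy)
  refine ⟨a, fun u hux hu => ?_⟩
  by_cases huS : u ∈ S
  · exact hS' (mem_image.2 ⟨u, huS, hu.trans ha.symm⟩)
  · exact hc (hx u hux huS y hy) hu ha

end IndicatedGame

section CompleteExpansion

variable {V : Type*} {G : SimpleGraph V} {m : V → ℕ} {k : ℕ}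

lemma completeExpansion_isClique_fiber (v : V) :
    (completeExpansion G m).IsClique
      (((univ : Finset (Fin (m v))).map (Embedding.sigmaMk v) : Finset (Σ v, Fin (m v))) :
        Set (Σ v, Fin (m v))) := by
  intro x hx y hy hne
  obtain ⟨i, -, rfl⟩ := mem_map.1 hx
  obtain ⟨j, -, rfl⟩ := mem_map.1 hy
  exact .inr ⟨rfl, hne⟩

lemma completeExpansion_isClique_sigma {R : Finset V} (hR : G.IsClique (R : Set V)) :
    (completeExpansion G m).IsClique
      (↑(R.sigma fun v => (univ : Finset (Fin (m v)))) : Set (Σ v, Fin (m v))) := by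
  intro x hx y hy hne
  by_cases h : x.1 = y.1
  · exact .inr ⟨h, hne⟩
  · exact .inl (hR (mem_sigma.1 hx).1 (mem_sigma.1 hy).1 h)

lemma completeExpansion_exists_free_color {c : (Σ v, Fin (m v)) → Option (Fin k)}
    (hc : IsPartialColoring (completeExpansion G m) c) {v w : V} (i : Fin (m v))
    (hN : ∀ u, G.Adj u v → G.Adj u w) (hm : m v ≤ m w) (hw : ∀ j, c ⟨w, j⟩ ≠ none) :
    ∃ a, ∀ u, (completeExpansion G m).Adj u ⟨v, i⟩ → c u ≠ some a := by
  refine hc.exists_free_color (K := univ.map (Embedding.sigmaMk w))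
    (S := (univ.erase i).map (Embedding.sigmaMk v)) (completeExpansion_isClique_fiber w)
    (by simpa using hw) ?_ ?_
  · simp only [card_map, card_erase_of_mem (mem_univ i), card_univ, Fintype.card_fin]
    have := i.pos
    omega
  · rintro u (hu | ⟨hu, hne⟩) huS y hy
    · obtain ⟨j, -, rfl⟩ := mem_map.1 hy
      exact .inl (hN _ hu)
    · obtain ⟨u, j⟩ := u
      obtain rfl : u = v := hu
      exact absurd (mem_map_of_mem _ (mem_erase.2 ⟨fun h => hne (by subst h; rfl), mem_univ j⟩))
        huS

theorem indicatedColorable_completeExpansion_of_dominating [Fintype V] (R : Finset V)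
    (hR : ∀ v, ∃ w ∈ R, (∀ u, G.Adj u v → G.Adj u w) ∧ m v ≤ m w)
    (hk : ∑ w ∈ R, m w ≤ k) :
    IndicatedColorable (completeExpansion G m) k := by
  set C : Finset (Σ v, Fin (m v)) := R.sigma fun _ => univ
  have hCk : #C ≤ k := by simpa [C, card_sigma] using hk
  refine annWins_of_invariant (H := completeExpansion G m)
    (fun c => IsPartialColoring (completeExpansion G m) c ∧
      ((∀ x, c x ≠ none → x.1 ∈ R) ∨ ∀ x, x.1 ∈ R → c x ≠ none)) ?_ _
    ⟨fun _ _ _ _ h => by simp at h, .inl fun _ h => absurd rfl h⟩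
  rintro c ⟨hc, hcR⟩ ⟨x₀, hx₀⟩
  by_cases hrep : ∃ x, x.1 ∈ R ∧ c x = none
  · obtain ⟨x, hxR, hx⟩ := hrep
    have honly : ∀ y, c y ≠ none → y.1 ∈ R := hcR.resolve_right fun h => h x hxR hx
    have hxC : x ∈ C := mem_sigma.2 ⟨hxR, mem_univ _⟩
    have hcard : #(C.erase x) < k := by
      have := card_pos.2 ⟨x, hxC⟩
      rw [card_erase_of_mem hxC]
      omega
    obtain ⟨a, ha⟩ := exists_unused_color (c := c) _
      (fun y hy => mem_erase.2 ⟨fun h => hy (h ▸ hx), mem_sigma.2 ⟨honly y hy, mem_univ _⟩⟩)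
      hcard
    refine ⟨x, hx, ⟨a, fun u _ => ha u⟩, fun b hb => ⟨hc.update hb, .inl fun y hy => ?_⟩⟩
    rcases eq_or_ne y x with rfl | hne
    · exact hxR
    · exact honly y (by simpa [hne] using hy)
  · simp only [not_exists, not_and] at hrep
    obtain ⟨w, hwR, hN, hm⟩ := hR x₀.1
    refine ⟨x₀, hx₀, completeExpansion_exists_free_color hc x₀.2 hN hm fun i => hrep ⟨w, i⟩ hwR,
      fun a ha => ⟨hc.update ha, .inr fun y hy => ?_⟩⟩
    rcases eq_or_ne y x₀ with rfl | hne
    · simp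
    · simpa [hne] using hrep y hy

end CompleteExpansion

lemma exists_isClique_dominating_of_adj_iff {V ι : Type*} [Fintype V] {G : SimpleGraph V}
    {p : V → ι} (hp : ∀ u v, G.Adj u v ↔ p u ≠ p v) (m : V → ℕ) :
    ∃ R : Finset V, G.IsClique (R : Set V) ∧
      ∀ v, ∃ w ∈ R, (∀ u, G.Adj u v → G.Adj u w) ∧ m v ≤ m w := by
  have hmax : ∀ j : Set.range p, ∃ w, p w = j ∧ ∀ u, p u = j → m u ≤ m w := by
    rintro ⟨_, v, rfl⟩
    obtain ⟨w, hw, hmax⟩ := (univ.filter (p · = p v)).exists_max_image m ⟨v, by simp⟩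
    exact ⟨w, (mem_filter.1 hw).2, fun u hu => hmax u (by simpa using hu)⟩
  choose rep hrep_part hrep_max using hmax
  refine ⟨univ.image rep, ?_, fun v => ⟨rep ⟨p v, v, rfl⟩, mem_image_of_mem _ (mem_univ _), ?_⟩⟩
  · simp only [coe_image, coe_univ, Set.image_univ]
    rintro _ ⟨j, rfl⟩ _ ⟨j', rfl⟩ hne
    rw [hp, hrep_part, hrep_part]
    exact fun h => hne (congrArg rep (Subtype.ext h))
  · refine ⟨fun u hu => ?_, hrep_max _ v rfl⟩
    rw [hp, hrep_part]
    exact (hp u v).1 hu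

theorem completeExpansion_completeMultipartite_indicatedColorable_general
    {V : Type*} [Fintype V] (G : SimpleGraph V)
    (hG : ∃ (ι : Type) (p : V → ι), ∀ u v, G.Adj u v ↔ p u ≠ p v)
    (m : V → ℕ) (k : ℕ)
    (hk : (completeExpansion G m).chromaticNumber ≤ k) :
    IndicatedColorable (completeExpansion G m) k := by
  obtain ⟨ι, p, hp⟩ := hG
  obtain ⟨R, hRclique, hRdom⟩ := exists_isClique_dominating_of_adj_iff hp m
  refine indicatedColorable_completeExpansion_of_dominating R hRdom ?_
  simpa [card_sigma] using (completeExpansion_isClique_sigma hRclique).card_le_of_colorable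
    (chromaticNumber_le_iff_colorable.1 hk)

/-- If `G` is a complete multipartite graph, then every complete expansion `𝕂[G]` of `G`
is `k`-indicated colorable for every `k ≥ χ(𝕂[G])`. -/
theorem completeExpansion_completeMultipartite_indicatedColorable
    {V : Type*} [Fintype V] (G : SimpleGraph V)
    (hG : ∃ (ι : Type) (p : V → ι), ∀ u v, G.Adj u v ↔ p u ≠ p v)
    (m : V → ℕ) (hm : ∀ v, 0 < m v) (k : ℕ)
    (hk : (completeExpansion G m).chromaticNumber ≤ k) :
    IndicatedColorable (completeExpansion G m) k :=
  completeExpansion_completeMultipartite_indicatedColorable_general G hG m k hk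
end

section
/- Let G be a finite complete multipartite graph and let H be a finite nonempty bipartite graph. Then the lexicographic product G[H] is k-indicated colorable for every integer k ≥ χ(G[H]). -/
open SimpleGraph
open scoped Classical

/-!
Write `L = G[H]` as the join of the graphs `L[P]`, one for each part `P` of `G`; each `L[P]` is a
disjoint union of copies of `H`, hence bipartite, and a colour used in one part never occurs in
another. Ann first presents a clique consisting of one or two adjacent vertices of each part, one
on each side that exists; it has at most `χ(L) ≤ k` vertices, so Ben can colour it. Afterwards she
keeps, for every part and every side of it that still has uncoloured vertices, an *anchor*: a
colour already used in the part that no uncoloured vertex on that side sees, the anchors of the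
two sides being different while both sides are unfinished. Anchors make every vertex of the part
colourable, and a case analysis shows that Ann can always present a vertex whose colouring
preserves them.
-/

open Function Finset

namespace Function

variable {V γ : Type*} [DecidableEq V] {c : V → Option γ} {u v : V} {a b : γ}

lemma update_some_eq_none_iff : update c v (some a) u = none ↔ u ≠ v ∧ c u = none := by
  by_cases h : u = v <;> simp [h]

lemma update_some_eq_some_iff :
    update c v (some a) u = some b ↔ (u = v ∧ a = b) ∨ (u ≠ v ∧ c u = some b) := by
  by_cases h : u = v <;> simp [h]

lemma card_none_update_some_lt [Fintype V] (hv : c v = none) (a : γ) :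
    #{u | update c v (some a) u = none} < #{u | c u = none} := by
  refine card_lt_card ⟨fun u hu => ?_, fun h => ?_⟩
  · simp only [mem_filter, mem_univ, true_and, update_some_eq_none_iff] at hu ⊢
    exact hu.2
  · have := h (by simpa using hv)
    simp [update_some_eq_none_iff] at this

end Function

namespace SimpleGraph

variable {V ι : Type*} {L : SimpleGraph V} {k : ℕ}

def Available (L : SimpleGraph V) (c : V → Option (Fin k)) (v : V) (col : Fin k) : Prop :=
  ∀ u, L.Adj u v → c u ≠ some col

def SafeMove (L : SimpleGraph V) (Q : (V → Option (Fin k)) → Prop) (c : V → Option (Fin k))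
    (u : V) : Prop :=
  c u = none ∧ (∃ col, L.Available c u col) ∧
    ∀ col, L.Available c u col → Q (update c u (some col))

theorem _root_.AnnWins.of_invariant [Fintype V] (I : (V → Option (Fin k)) → Prop)
    (step : ∀ c, I c → ∀ v, c v = none → ∃ u, L.SafeMove I c u) (c : V → Option (Fin k))
    (hc : I c) : AnnWins L k c := by
  by_cases hdone : ∀ v, (c v).isSome
  · exact .done c hdone
  push Not at hdone
  obtain ⟨v, hv⟩ := hdone
  obtain ⟨u, hu, hex, hnext⟩ := step c hc v (Option.not_isSome_iff_eq_none.mp hv)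
  exact .step c u hu hex fun col hcol => AnnWins.of_invariant I step _ (hnext col hcol)
termination_by #{v | c v = none}
decreasing_by exact card_none_update_some_lt hu col

lemma Available.update_of_ne {c : V → Option (Fin k)} {u v : V} {col d : Fin k}
    (h : L.Available c u d) (hcol : col ≠ d) : L.Available (update c v (some col)) u d := by
  intro w hw hwd
  rcases update_some_eq_some_iff.mp hwd with ⟨-, rfl⟩ | ⟨-, hwd⟩
  exacts [hcol rfl, h w hw hwd]

lemma Available.update_of_not_adj {c : V → Option (Fin k)} {u v : V} {col d : Fin k}
    (h : L.Available c u d) (hvu : ¬ L.Adj v u) : L.Available (update c v (some col)) u d := by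
  intro w hw hwd
  rcases update_some_eq_some_iff.mp hwd with ⟨rfl, -⟩ | ⟨-, hwd⟩
  exacts [hvu hw, h w hw hwd]

structure IsJoinOfBipartite (L : SimpleGraph V) (π : V → ι) (σ : V → Bool) : Prop where
  adj_of_ne : ∀ {u v}, π u ≠ π v → L.Adj u v
  side_ne_of_adj : ∀ {u v}, π u = π v → L.Adj u v → σ u ≠ σ v

section Anchors

variable {π : V → ι} {σ : V → Bool} {c : V → Option (Fin k)} {P : ι} {s t : Bool}
  {u v : V} {col d e : Fin k}

def HasUncolored (π : V → ι) (σ : V → Bool) (c : V → Option (Fin k)) (P : ι) (s : Bool) :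
    Prop :=
  ∃ v, π v = P ∧ σ v = s ∧ c v = none

def IsAnchor (L : SimpleGraph V) (π : V → ι) (σ : V → Bool) (c : V → Option (Fin k))
    (P : ι) (s : Bool) (d : Fin k) : Prop :=
  (∃ w, π w = P ∧ c w = some d) ∧
    ∀ v, π v = P → σ v = s → c v = none → L.Available c v d

def Anchored (L : SimpleGraph V) (π : V → ι) (σ : V → Bool) (c : V → Option (Fin k))
    (P : ι) : Prop :=
  ∀ s, HasUncolored π σ c P s → ∃ d, L.IsAnchor π σ c P s d ∧
    (HasUncolored π σ c P (!s) → ∃ e, e ≠ d ∧ L.IsAnchor π σ c P (!s) e)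

def AllAnchored (L : SimpleGraph V) (π : V → ι) (σ : V → Bool) (c : V → Option (Fin k)) :
    Prop :=
  ∀ P, L.Anchored π σ c P

lemma HasUncolored.of_update (h : HasUncolored π σ (update c v (some col)) P s) :
    HasUncolored π σ c P s := by
  obtain ⟨u, hu, hus, huc⟩ := h
  exact ⟨u, hu, hus, (update_some_eq_none_iff.mp huc).2⟩

lemma IsAnchor.update_of_available (hA : L.IsAnchor π σ c P s d) (hv : c v = none)
    (havail : ∀ u, π u = P → σ u = s → L.Available c u d →
      L.Available (update c v (some col)) u d) :
    L.IsAnchor π σ (update c v (some col)) P s d := by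
  obtain ⟨⟨w, hwP, hwd⟩, hfree⟩ := hA
  have hwv : w ≠ v := by rintro rfl; simp [hv] at hwd
  refine ⟨⟨w, hwP, by rwa [update_of_ne hwv]⟩, fun u hu hus huc => ?_⟩
  exact havail u hu hus (hfree u hu hus (update_some_eq_none_iff.mp huc).2)

lemma IsAnchor.update_of_ne (hA : L.IsAnchor π σ c P s d) (hv : c v = none) (hcol : col ≠ d) :
    L.IsAnchor π σ (update c v (some col)) P s d :=
  hA.update_of_available hv fun _ _ _ h => h.update_of_ne hcol

lemma IsAnchor.update_of_side (hJ : L.IsJoinOfBipartite π σ) (hA : L.IsAnchor π σ c P s d)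
    (hv : c v = none) (hvP : π v = P) (hvs : σ v = s) :
    L.IsAnchor π σ (update c v (some col)) P s d :=
  hA.update_of_available hv fun _ hu hus h =>
    h.update_of_not_adj fun hvu => hJ.side_ne_of_adj (hvP.trans hu.symm) hvu (hvs.trans hus.symm)

lemma IsAnchor.ne_of_available (hJ : L.IsJoinOfBipartite π σ) (hA : L.IsAnchor π σ c P s d)
    (hcol : L.Available c v col) (hvP : π v ≠ P) : col ≠ d := by
  obtain ⟨⟨w, hwP, hwd⟩, -⟩ := hA
  rintro rfl
  exact hcol w (hJ.adj_of_ne (hwP.trans_ne (Ne.symm hvP))) hwd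

lemma Anchored.update_of_ne (hJ : L.IsJoinOfBipartite π σ) (h : L.Anchored π σ c P)
    (hv : c v = none) (hcol : L.Available c v col) (hvP : π v ≠ P) :
    L.Anchored π σ (update c v (some col)) P := by
  intro s hs
  obtain ⟨d, hd, hpair⟩ := h s hs.of_update
  refine ⟨d, hd.update_of_ne hv (hd.ne_of_available hJ hcol hvP), fun hs' => ?_⟩
  obtain ⟨e, hed, he⟩ := hpair hs'.of_update
  exact ⟨e, hed, he.update_of_ne hv (he.ne_of_available hJ hcol hvP)⟩

lemma anchored_of_pair (hde : d ≠ e) (hd : L.IsAnchor π σ c P t d)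
    (he : L.IsAnchor π σ c P (!t) e) : L.Anchored π σ c P := by
  intro s _
  rcases Bool.eq_or_eq_not s t with rfl | rfl
  · exact ⟨d, hd, fun _ => ⟨e, hde.symm, he⟩⟩
  · exact ⟨e, he, fun _ => ⟨d, hde, by rwa [Bool.not_not]⟩⟩

lemma anchored_of_not_hasUncolored (hd : L.IsAnchor π σ c P t d)
    (hno : ¬ HasUncolored π σ c P (!t)) : L.Anchored π σ c P := by
  intro s hs
  rcases Bool.eq_or_eq_not s t with rfl | rfl
  · exact ⟨d, hd, fun h => absurd h hno⟩
  · exact absurd hs hno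

section SafeMoves

variable (hJ : L.IsJoinOfBipartite π σ) (hu : π u = P) (huc : c u = none)
include hJ hu huc

lemma safeMove_of_not_hasUncolored (hut : σ u = t) (hd : L.IsAnchor π σ c P t d)
    (hno : ¬ HasUncolored π σ c P (!t)) : L.SafeMove (L.Anchored π σ · P) c u :=
  ⟨huc, ⟨d, hd.2 u hu hut huc⟩, fun _ _ =>
    anchored_of_not_hasUncolored (hd.update_of_side hJ huc hu hut) fun h => hno h.of_update⟩

/-- As `u` sees `d`, Ben cannot colour it with `d`, so `d` remains an anchor of side `t`. -/
lemma safeMove_of_not_available (hut : σ u = !t) (hde : d ≠ e) (hd : L.IsAnchor π σ c P t d)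
    (he : L.IsAnchor π σ c P (!t) e) (hnot : ¬ L.Available c u d) :
    L.SafeMove (L.Anchored π σ · P) c u := by
  refine ⟨huc, ⟨e, he.2 u hu hut huc⟩, fun col hcol => ?_⟩
  have hcol_d : col ≠ d := by rintro rfl; exact hnot hcol
  exact anchored_of_pair hde (hd.update_of_ne huc hcol_d) (he.update_of_side hJ huc hu hut)

/-- With two colours anchoring both sides, whichever one Ben avoids still anchors the other side. -/
lemma safeMove_of_common_anchors (hut : σ u = t) (hde : d ≠ e) (hd : L.IsAnchor π σ c P t d)
    (hd' : L.IsAnchor π σ c P (!t) d) (he : L.IsAnchor π σ c P t e)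
    (he' : L.IsAnchor π σ c P (!t) e) : L.SafeMove (L.Anchored π σ · P) c u := by
  refine ⟨huc, ⟨d, hd.2 u hu hut huc⟩, fun col _ => ?_⟩
  by_cases hce : col = e
  · subst hce
    exact anchored_of_pair hde.symm (he.update_of_side hJ huc hu hut)
      (hd'.update_of_ne huc hde.symm)
  · exact anchored_of_pair hde (hd.update_of_side hJ huc hu hut) (he'.update_of_ne huc hce)

end SafeMoves

lemma Anchored.exists_safeMove (hJ : L.IsJoinOfBipartite π σ) (h : L.Anchored π σ c P)
    (hU : HasUncolored π σ c P s) :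
    ∃ u, π u = P ∧ L.SafeMove (L.Anchored π σ · P) c u := by
  obtain ⟨d, hd, hpair⟩ := h s hU
  obtain ⟨v, hvP, hvs, hvc⟩ := hU
  by_cases hU' : HasUncolored π σ c P (!s)
  swap
  · exact ⟨v, hvP, safeMove_of_not_hasUncolored hJ hvP hvc hvs hd hU'⟩
  obtain ⟨e, hed, he⟩ := hpair hU'
  by_cases hd_avail : ∃ u, π u = P ∧ σ u = !s ∧ c u = none ∧ ¬ L.Available c u d
  · obtain ⟨u, hu, hus, huc, hnot⟩ := hd_avail
    exact ⟨u, hu, safeMove_of_not_available hJ hu huc hus hed.symm hd he hnot⟩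
  by_cases he_avail : ∃ u, π u = P ∧ σ u = s ∧ c u = none ∧ ¬ L.Available c u e
  · obtain ⟨u, hu, hus, huc, hnot⟩ := he_avail
    rw [← Bool.not_not s] at hd hus
    exact ⟨u, hu, safeMove_of_not_available hJ hu huc hus hed he hd hnot⟩
  push Not at hd_avail he_avail
  exact ⟨v, hvP, safeMove_of_common_anchors hJ hvP hvc hvs hed.symm hd ⟨hd.1, hd_avail⟩
    ⟨he.1, he_avail⟩ he⟩

lemma AllAnchored.exists_safeMove (hJ : L.IsJoinOfBipartite π σ) (h : L.AllAnchored π σ c)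
    (hv : c v = none) : ∃ u, L.SafeMove (L.AllAnchored π σ) c u := by
  obtain ⟨u, hu, huc, hex, hnext⟩ := (h (π v)).exists_safeMove hJ ⟨v, rfl, rfl, hv⟩
  refine ⟨u, huc, hex, fun col hcol P => ?_⟩
  by_cases hP : P = π v
  · exact hP ▸ hnext col hcol
  · exact (h P).update_of_ne hJ huc hcol (hu.trans_ne (Ne.symm hP))

end Anchors

section Clique

variable {π : V → ι} {σ : V → Bool} {K : Finset V} {c : V → Option (Fin k)} {v : V}
  {col : Fin k}

def ColorsDistinctWithin (K : Finset V) (c : V → Option (Fin k)) : Prop :=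
  (∀ w, c w ≠ none → w ∈ K) ∧ ∀ u w d, c u = some d → c w = some d → u = w

lemma exists_unused_color (hsupp : ∀ w, c w ≠ none → w ∈ K) (hv : v ∈ K)
    (hvc : c v = none) (hk : #K ≤ k) : ∃ col : Fin k, ∀ w, c w ≠ some col := by
  by_contra! hused
  choose f hf using hused
  have hmaps : ∀ col ∈ (univ : Finset (Fin k)), f col ∈ K.erase v := fun col _ =>
    mem_erase.mpr ⟨fun h => by simpa [h, hvc] using hf col, hsupp _ (by simp [hf])⟩
  have hinj : Set.InjOn f (univ : Finset (Fin k)) := fun a _ b _ hab =>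
    Option.some_injective _ ((hf a).symm.trans (hab ▸ hf b))
  have := card_le_card_of_injOn f hmaps hinj
  simp only [card_univ, Fintype.card_fin] at this
  have := card_erase_lt_of_mem hv
  omega

lemma ColorsDistinctWithin.update_of_mem (h : ColorsDistinctWithin K c)
    (hK : L.IsClique (K : Set V)) (hv : v ∈ K) (hcol : L.Available c v col) :
    ColorsDistinctWithin K (update c v (some col)) := by
  refine ⟨fun w hw => ?_, fun u w d hu hw => ?_⟩
  · by_cases hwv : w = v
    · exact hwv ▸ hv
    · exact h.1 w (by rwa [update_of_ne hwv] at hw)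
  · have key : ∀ x, x ≠ v → c x = some col → False := fun x hxv hx =>
      hcol x (hK (h.1 x (by simp [hx])) hv hxv) hx
    rcases update_some_eq_some_iff.mp hu with ⟨huv, hcol_d⟩ | ⟨huv, hu⟩ <;>
      rcases update_some_eq_some_iff.mp hw with ⟨hwv, hcol_d'⟩ | ⟨hwv, hw⟩
    · exact huv.trans hwv.symm
    · exact (key w hwv (hcol_d ▸ hw)).elim
    · exact (key u huv (hcol_d' ▸ hu)).elim
    · exact h.2 u w d hu hw

lemma ColorsDistinctWithin.allAnchored (hJ : L.IsJoinOfBipartite π σ)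
    (h : ColorsDistinctWithin K c) (hK : ∀ w ∈ K, c w ≠ none)
    (hmeet : ∀ v, ∃ w ∈ K, π w = π v ∧ σ w = σ v) : L.AllAnchored π σ c := by
  have anchor : ∀ v, ∃ w ∈ K, ∃ d, c w = some d ∧ π w = π v ∧ σ w = σ v ∧
      L.IsAnchor π σ c (π v) (σ v) d := by
    intro v
    obtain ⟨w, hwK, hwP, hws⟩ := hmeet v
    obtain ⟨d, hwd⟩ := Option.ne_none_iff_exists'.mp (hK w hwK)
    refine ⟨w, hwK, d, hwd, hwP, hws, ⟨w, hwP, hwd⟩, fun u hu hus _ x hxu hxd => ?_⟩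
    obtain rfl := h.2 x w d hxd hwd
    exact hJ.side_ne_of_adj (hwP.trans hu.symm) hxu (hws.trans hus.symm)
  rintro P s ⟨v, rfl, rfl, -⟩
  obtain ⟨w, -, d, hwd, -, hws, hd⟩ := anchor v
  refine ⟨d, hd, fun ⟨v', hv'P, hv's, _⟩ => ?_⟩
  obtain ⟨w', -, e, hw'e, -, hw's, he⟩ := anchor v'
  rw [hv'P, hv's] at he
  refine ⟨e, fun hed => ?_, he⟩
  obtain rfl := h.2 w w' d hwd (hed ▸ hw'e)
  rw [hws, hv's] at hw's
  exact Bool.not_ne_self _ hw's.symm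

end Clique

theorem IsJoinOfBipartite.indicatedColorable [Fintype V] {π : V → ι} {σ : V → Bool}
    (hJ : L.IsJoinOfBipartite π σ) (K : Finset V) (hK : L.IsClique (K : Set V)) (hk : #K ≤ k)
    (hmeet : ∀ v, ∃ w ∈ K, π w = π v ∧ σ w = σ v) : IndicatedColorable L k := by
  let I : (V → Option (Fin k)) → Prop := fun c => ColorsDistinctWithin K c ∨ L.AllAnchored π σ c
  refine AnnWins.of_invariant I ?_ _ (Or.inl ⟨by simp, by simp⟩)
  have lift : ∀ c, L.AllAnchored π σ c → ∀ v, c v = none → ∃ u, L.SafeMove I c u := by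
    intro c hc v hv
    obtain ⟨u, huc, hex, hnext⟩ := hc.exists_safeMove hJ hv
    exact ⟨u, huc, hex, fun col hcol => Or.inr (hnext col hcol)⟩
  rintro c (hc | hc) v hv
  · by_cases hKc : ∃ w ∈ K, c w = none
    · obtain ⟨w, hwK, hwc⟩ := hKc
      obtain ⟨col, hcol⟩ := exists_unused_color hc.1 hwK hwc hk
      exact ⟨w, hwc, ⟨col, fun u _ => hcol u⟩,
        fun col hcol => Or.inl (hc.update_of_mem hK hwK hcol)⟩
    · push Not at hKc
      exact lift c (hc.allAnchored hJ hKc hmeet) v hv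
  · exact lift c hc v hv

lemma Colorable.exists_sides_covered_by_adj_pair {β : Type*} [Nonempty β] {H : SimpleGraph β}
    (hH : H.Colorable 2) : ∃ σ : β → Bool, (∀ y y', H.Adj y y' → σ y ≠ σ y') ∧
    ∃ y₀ y₁, (y₀ = y₁ ∨ H.Adj y₀ y₁) ∧ ∀ z, σ z = σ y₀ ∨ σ z = σ y₁ := by
  by_cases hE : ∃ y₀ y₁, H.Adj y₀ y₁
  · obtain ⟨y₀, y₁, h⟩ := hE
    obtain ⟨C⟩ := hH
    have two : ∀ a b e : Fin 2, a ≠ b → decide (a = e) ≠ decide (b = e) := by decide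
    refine ⟨fun z => decide (C z = C y₀), fun y y' hyy' => two _ _ _ (C.valid hyy'),
      y₀, y₁, Or.inr h, fun z => ?_⟩
    by_cases hz : C z = C y₀ <;> simp [hz, (C.valid h).symm]
  · push Not at hE
    obtain ⟨y⟩ := ‹Nonempty β›
    exact ⟨fun _ => false, fun y y' h => absurd h (hE y y'), y, y, Or.inl rfl,
      fun _ => Or.inl rfl⟩

lemma isJoinOfBipartite_lexProd {α β : Type*} {G : SimpleGraph α} {H : SimpleGraph β}
    {p : α → ι} (hG : ∀ u v, G.Adj u v ↔ p u ≠ p v) {σ : β → Bool}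
    (hσ : ∀ y y', H.Adj y y' → σ y ≠ σ y') :
    (lexProd G H).IsJoinOfBipartite (fun v => p v.1) (fun v => σ v.2) where
  adj_of_ne h := Or.inl ((hG _ _).mpr h)
  side_ne_of_adj {u v} huv := by
    rintro (h | ⟨-, h⟩)
    exacts [absurd huv ((hG _ _).mp h), hσ _ _ h]

/-- One vertex over `y₀` and one over `y₁` in a fixed representative of every part of `G`. -/
lemma exists_isClique_lexProd_meeting_sides {α β : Type*} [Fintype α] {G : SimpleGraph α}
    {H : SimpleGraph β} {p : α → ι} (hG : ∀ u v, G.Adj u v ↔ p u ≠ p v) {σ : β → Bool}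
    {y₀ y₁ : β} (hy : y₀ = y₁ ∨ H.Adj y₀ y₁)
    (hcover : ∀ z, σ z = σ y₀ ∨ σ z = σ y₁) :
    ∃ K : Finset (α × β), (lexProd G H).IsClique (K : Set (α × β)) ∧
      ∀ v : α × β, ∃ w ∈ K, p w.1 = p v.1 ∧ σ w.2 = σ v.2 := by
  let r : α → α := fun a => (⟦a⟧ : Quotient (Setoid.ker p)).out
  have hr : ∀ a, p (r a) = p a := Setoid.ker_apply_mk_out
  have hr_eq : ∀ a b, p a = p b → r a = r b := fun a b h =>
    congrArg Quotient.out (Quotient.sound (Setoid.ker_def.mpr h))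
  let y : Bool → β := fun i => cond i y₁ y₀
  have hy_adj : ∀ i j, y i ≠ y j → H.Adj (y i) (y j) := by
    rintro (_ | _) (_ | _) hne
    exacts [absurd rfl hne, hy.resolve_left hne, (hy.resolve_left hne.symm).symm, absurd rfl hne]
  refine ⟨univ.image fun x : α × Bool => (r x.1, y x.2), ?_, fun ⟨a, z⟩ => ?_⟩
  · rw [coe_image]
    rintro _ ⟨⟨a, i⟩, -, rfl⟩ _ ⟨⟨b, j⟩, -, rfl⟩ hne
    by_cases hab : p a = p b
    · have hrab := hr_eq a b hab
      exact Or.inr ⟨hrab, hy_adj i j fun h => hne (Prod.ext hrab h)⟩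
    · exact Or.inl ((hG _ _).mpr (by rwa [hr, hr]))
  · rcases hcover z with h | h
    · exact ⟨(r a, y false), mem_image_of_mem _ (mem_univ (a, false)), hr a, h.symm⟩
    · exact ⟨(r a, y true), mem_image_of_mem _ (mem_univ (a, true)), hr a, h.symm⟩

end SimpleGraph

/-- If `G` is a complete multipartite graph and `H` is a nonempty bipartite graph,
then `G[H]` is `k`-indicated colorable for every `k ≥ χ(G[H])`. -/
theorem lexProd_completeMultipartite_bipartite_indicatedColorable
    {α β : Type*} [Fintype α] [Fintype β] [Nonempty β]
    (G : SimpleGraph α)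
    (hG : ∃ (ι : Type) (p : α → ι), ∀ u v, G.Adj u v ↔ p u ≠ p v)
    (H : SimpleGraph β) (hH : H.Colorable 2) (k : ℕ)
    (hk : (lexProd G H).chromaticNumber ≤ k) :
    IndicatedColorable (lexProd G H) k := by
  obtain ⟨ι, p, hGp⟩ := hG
  obtain ⟨σ, hσ, y₀, y₁, hy, hcover⟩ := hH.exists_sides_covered_by_adj_pair
  obtain ⟨K, hK, hmeet⟩ := exists_isClique_lexProd_meeting_sides hGp hy hcover
  exact (isJoinOfBipartite_lexProd hGp hσ).indicatedColorable K hK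
    (hK.card_le_of_colorable (chromaticNumber_le_iff_colorable.mp hk)) hmeet
end
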